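/- Let G be a completely metrizable topological group. If G has a torsion-free subgroup which is dense-in-itself, then G contains a torsion-free subgroup generated by a perfect set, i.e. there exists a perfect set P ⊆ G such that the subgroup generated by P is torsion-free. -/

import Mathlib

/-!
Let `K` be the closure of `H`: a complete metric space without isolated points. For a word `w`
in `n` letters and `k ≥ 1`, the relation `w(x) ^ k = 1 → w(x) = 1` on `Kⁿ` has dense interior:
it holds on the open set where `w(x) ^ k ≠ 1`, and on an open set where `w(x) ^ k = 1`
throughout, torsion-freeness of `H` gives `w = 1` at the dense set of points with coordinates in
`H`, hence everywhere. Mycielski's theorem then gives a Cantor set `P ⊆ K` whose tuples of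
distinct points satisfy all these countably many relations, and every element of the subgroup
generated by `P` is a word in distinct points of `P`.
-/

open Set Filter Cardinal FirstOrder

universe u v

/-- A topological space is completely metrizable if its topology is induced by a complete metric. -/
def CompletelyMetrizable (Y : Type*) [t : TopologicalSpace Y] : Prop :=
  ∃ m : MetricSpace Y, m.toUniformSpace.toTopologicalSpace = t ∧ @CompleteSpace Y m.toUniformSpace

/-- The weight of a topological space: the least cardinality of a topological basis. -/
noncomputable def topWeight (X : Type u) [TopologicalSpace X] : Cardinal.{u} :=
  ⨅ B : { B : Set (Set X) // TopologicalSpace.IsTopologicalBasis B }, Cardinal.mk B.1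

/-- A set is dense-in-itself if it is nonempty and has no isolated points
(in the subspace topology). -/
def DenseInItselfSet {X : Type*} [TopologicalSpace X] (S : Set X) : Prop :=
  S.Nonempty ∧ ∀ x ∈ S, AccPt x (𝓟 S)

/-- A set is perfect if it is nonempty, completely metrizable in the subspace topology,
and has no isolated points. -/
def IsPerfectSet {X : Type*} [TopologicalSpace X] (P : Set X) : Prop :=
  P.Nonempty ∧ CompletelyMetrizable P ∧ ∀ x ∈ P, AccPt x (𝓟 P)

/-- The `γ`-th Cantor–Bendixson derivative of a set: iterate the operation of removing
isolated points, taking intersections at limit stages. -/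
noncomputable def cbDeriv {X : Type u} [TopologicalSpace X] (A : Set X) (γ : Ordinal.{v}) :
    Set X :=
  Ordinal.limitRecOn γ A (fun _ ih => { x ∈ ih | AccPt x (𝓟 ih) })
    (fun o _ ih => ⋂ (o' : Ordinal.{v}) (h : o' < o), ih o' h)

/-- A monoid is torsion-free if no nontrivial elements have finite order
(the old Mathlib `Monoid.IsTorsionFree`, removed since). -/
def Monoid.IsTorsionFree (G : Type*) [Monoid G] : Prop :=
  ∀ g : G, g ≠ 1 → ¬IsOfFinOrder g

open Function Topology PiNat CantorScheme
open scoped ENNReal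

section Group

variable {G : Type*} [Group G]

theorem Monoid.IsTorsionFree.eq_one_of_pow_eq_one {M : Type*} [Monoid M]
    (hM : Monoid.IsTorsionFree M) {g : M} {k : ℕ} (hk : k ≠ 0) (hg : g ^ k = 1) : g = 1 :=
  by_contra fun hne => hM g hne (isOfFinOrder_iff_pow_eq_one.2 ⟨k, Nat.pos_of_ne_zero hk, hg⟩)

theorem Subgroup.exists_finset_of_mem_closure {S : Set G} {g : G}
    (hg : g ∈ Subgroup.closure S) :
    ∃ t : Finset G, ↑t ⊆ S ∧ g ∈ Subgroup.closure (t : Set G) := by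
  classical
  induction hg using Subgroup.closure_induction with
  | mem x hx => exact ⟨{x}, by simpa using hx, Subgroup.subset_closure (by simp)⟩
  | one => exact ⟨∅, by simp, one_mem _⟩
  | mul x y _ _ hx hy =>
    obtain ⟨t, ht, hxt⟩ := hx
    obtain ⟨t', ht', hyt'⟩ := hy
    refine ⟨t ∪ t', by simpa using union_subset ht ht', mul_mem ?_ ?_⟩
    · exact Subgroup.closure_mono (by simp) hxt
    · exact Subgroup.closure_mono (by simp) hyt'
  | inv x _ hx =>
    obtain ⟨t, ht, hxt⟩ := hx
    exact ⟨t, ht, inv_mem hxt⟩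

theorem Subgroup.exists_injective_freeGroup_lift_eq {S : Set G} {g : G}
    (hg : g ∈ Subgroup.closure S) : ∃ (n : ℕ) (x : Fin n → G) (w : FreeGroup (Fin n)),
      Injective x ∧ range x ⊆ S ∧ FreeGroup.lift x w = g := by
  obtain ⟨t, htS, hgt⟩ := Subgroup.exists_finset_of_mem_closure hg
  let x : Fin t.card → G := fun i => t.equivFin.symm i
  have hx : range x = t := (t.equivFin.symm.surjective.range_comp _).trans Subtype.range_coe
  rw [← hx, ← FreeGroup.range_lift_eq_closure] at hgt
  obtain ⟨w, hw⟩ := hgt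
  exact ⟨t.card, x, w, Subtype.val_injective.comp t.equivFin.symm.injective, hx ▸ htS, hw⟩

theorem Subgroup.isTorsionFree_closure {S : Set G}
    (hS : ∀ (n : ℕ) (x : Fin n → G), Injective x → range x ⊆ S →
      ∀ (w : FreeGroup (Fin n)) (k : ℕ),
        FreeGroup.lift x w ^ (k + 1) = 1 → FreeGroup.lift x w = 1) :
    Monoid.IsTorsionFree (Subgroup.closure S) := by
  intro g hg1 hg
  obtain ⟨k, hk, hgk⟩ := isOfFinOrder_iff_pow_eq_one.1 hg
  obtain ⟨n, x, w, hx, hxS, hxw⟩ := Subgroup.exists_injective_freeGroup_lift_eq g.2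
  have hgk' : (g : G) ^ k = 1 := by simpa using congrArg Subtype.val hgk
  refine hg1 (Subtype.ext ?_)
  rw [Subgroup.coe_one, ← hxw]
  refine hS n x hx hxS w (k - 1) ?_
  rwa [Nat.sub_add_cancel hk, hxw]

theorem FreeGroup.lift_mem {H : Subgroup G} {ι : Type*} {x : ι → G} (hx : ∀ i, x i ∈ H)
    (w : FreeGroup ι) : FreeGroup.lift x w ∈ H :=
  (Subgroup.closure_le H).2 (range_subset_iff.2 hx)
    (FreeGroup.range_lift_eq_closure (f := x) ▸ MonoidHom.mem_range.2 ⟨w, rfl⟩)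

variable [TopologicalSpace G] [IsTopologicalGroup G]

theorem FreeGroup.continuous_lift_apply {ι : Type*} (w : FreeGroup ι) :
    Continuous fun x : ι → G => FreeGroup.lift x w := by
  induction w using FreeGroup.induction_on with
  | C1 => simpa using continuous_const
  | of i => simpa using continuous_apply i
  | inv_of i _ =>
    simp only [_root_.map_inv, lift_apply_of]
    exact (continuous_apply i).inv
  | mul u v hu hv =>
    simp only [_root_.map_mul]
    exact hu.mul hv

end Group

section Topology

variable {X : Type*} [TopologicalSpace X]

theorem dense_interior_setOf_imp {p q : X → Prop} (hp : IsClosed {x | p x})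
    (hq : IsClosed {x | q x}) {D : Set X} (hD : Dense D) (hpq : ∀ x ∈ D, p x → q x) :
    Dense (interior {x | p x → q x}) := by
  refine dense_iff_inter_open.2 fun U hU ⟨x, hx⟩ => ?_
  by_cases hUp : ∀ y ∈ U, p y
  · have hUq : U ⊆ {y | q y} := (hD.open_subset_closure_inter hU).trans
      (closure_minimal (fun y hy => hpq y hy.2 (hUp y hy.1)) hq)
    exact ⟨x, hx, interior_maximal (s := {x | p x → q x}) (fun y hy _ => hUq hy) hU hx⟩
  · obtain ⟨y, hyU, hy⟩ : ∃ y ∈ U, ¬p y := by simpa using hUp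
    exact ⟨y, hyU, interior_maximal (fun z hz h => absurd h hz) hp.isOpen_compl hy⟩

theorem Preperfect.perfectSpace {C : Set X} (hC : Preperfect C) : PerfectSpace C := by
  refine ⟨fun x _ => accPt_iff_nhds.2 fun U hU => ?_⟩
  obtain ⟨u, hu, huU⟩ := (mem_nhds_subtype C x U).1 hU
  obtain ⟨y, ⟨hyu, hyC⟩, hyx⟩ := accPt_iff_nhds.1 (hC x x.2) u hu
  exact ⟨⟨y, hyC⟩, ⟨huU hyu, trivial⟩, fun h => hyx (congrArg Subtype.val h)⟩

end Topology

instance : PerfectSpace (ℕ → Bool) := by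
  refine ⟨fun σ _ => accPt_iff_frequently.2 ?_⟩
  have hlim : Tendsto (fun n => update σ n (!σ n)) atTop (𝓝 σ) :=
    tendsto_pi_nhds.2 fun i => tendsto_const_nhds.congr' <|
      (eventually_gt_atTop i).mono fun n hn => (update_of_ne hn.ne _ _).symm
  refine hlim.frequently (Frequently.of_forall fun n => ⟨fun h => ?_, trivial⟩)
  simpa using congrFun h n

theorem Continuous.isPerfectSet_range {Y : Type*} [MetricSpace Y] {f : (ℕ → Bool) → Y}
    (hf : Continuous f) (hinj : Injective f) : IsPerfectSet (range f) := by
  refine ⟨range_nonempty f,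
    ⟨inferInstance, rfl, (isCompact_range hf).isComplete.completeSpace_coe⟩, ?_⟩
  rintro _ ⟨σ, rfl⟩
  simpa [map_principal] using (PerfectSpace.univ_preperfect σ trivial).map hf.continuousAt hinj

theorem eventually_injective_res {α ι : Type*} [Finite ι] {σ : ι → ℕ → α}
    (hσ : Injective σ) : ∀ᶠ m in atTop, Injective fun i => res (σ i) m := by
  have h : ∀ i j, ∀ᶠ m in atTop, res (σ i) m = res (σ j) m → i = j := by
    intro i j
    by_cases hij : i = j
    · exact Eventually.of_forall fun _ _ => hij
    · obtain ⟨k, hk⟩ := not_forall.1 fun h => hij (hσ (funext h))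
      exact (eventually_gt_atTop k).mono fun m hm h => absurd (res_eq_res.1 h hm) hk
  filter_upwards [eventually_all.2 fun i => eventually_all.2 (h i)] with m hm i j using hm i j

section

variable {X : Type*}

theorem exists_shrink_univ_pi_subset [TopologicalSpace X] {ι : Type*} {n : ℕ}
    {R : Set (Fin n → X)} (hR : Dense (interior R)) {t : Fin n → ι} (ht : Injective t)
    {U : ι → Set X} (hU : ∀ a, IsOpen (U a) ∧ (U a).Nonempty) :
    ∃ V : ι → Set X, (∀ a, IsOpen (V a) ∧ (V a).Nonempty) ∧ (∀ a, V a ⊆ U a) ∧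
      univ.pi (fun i => V (t i)) ⊆ R := by
  have hbox : IsOpen (univ.pi fun i => U (t i)) := isOpen_set_pi finite_univ fun i _ => (hU _).1
  obtain ⟨y, hyU, hyR⟩ := hR.inter_open_nonempty _ hbox
    (univ_pi_nonempty_iff.2 fun i => (hU (t i)).2)
  obtain ⟨W, hW, hWR⟩ := isOpen_pi_iff'.1 (hbox.inter isOpen_interior) y ⟨hyU, hyR⟩
  refine ⟨fun a => U a ∩ ⋂ (i) (_ : t i = a), W i, fun a => ⟨?_, ?_⟩,
    fun a => inter_subset_left, fun x hx => interior_subset (hWR fun i _ => ?_).2⟩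
  · exact (hU a).1.inter
      (isOpen_iInter_of_finite fun i => isOpen_iInter_of_finite fun _ => (hW i).1)
  · by_cases ha : ∃ i, t i = a
    · obtain ⟨i, rfl⟩ := ha
      refine ⟨y i, hyU i trivial, mem_iInter₂.2 fun j hj => ?_⟩
      exact ht hj ▸ (hW j).2
    · obtain ⟨z, hz⟩ := (hU a).2
      exact ⟨z, hz, mem_iInter₂.2 fun i hi => absurd ⟨i, hi⟩ ha⟩
  · exact mem_iInter₂.1 (hx i trivial).2 i rfl

theorem exists_shrink_forall_univ_pi_subset [TopologicalSpace X] {ι : Type*} {n : ℕ}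
    {R : Set (Fin n → X)} (hR : Dense (interior R)) (T : Finset (Fin n → ι))
    {U : ι → Set X} (hU : ∀ a, IsOpen (U a) ∧ (U a).Nonempty) :
    ∃ V : ι → Set X, (∀ a, IsOpen (V a) ∧ (V a).Nonempty) ∧ (∀ a, V a ⊆ U a) ∧
      ∀ t ∈ T, Injective t → univ.pi (fun i => V (t i)) ⊆ R := by
  classical
  induction T using Finset.induction_on with
  | empty => exact ⟨U, hU, fun _ => subset_rfl, by simp⟩
  | insert t T _ ih =>
    obtain ⟨V, hV, hVU, hVR⟩ := ih
    by_cases ht : Injective t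
    · obtain ⟨V', hV', hV'V, hV'R⟩ := exists_shrink_univ_pi_subset hR ht hV
      refine ⟨V', hV', fun a => (hV'V a).trans (hVU a), fun t' ht' ht'inj => ?_⟩
      rcases Finset.mem_insert.1 ht' with rfl | ht'
      · exact hV'R
      · exact (pi_mono fun i _ => hV'V _).trans (hVR t' ht' ht'inj)
    · refine ⟨V, hV, hVU, fun t' ht' ht'inj => ?_⟩
      rcases Finset.mem_insert.1 ht' with rfl | ht'
      · exact absurd ht'inj ht
      · exact hVR t' ht' ht'inj

theorem exists_isOpen_closure_subset_ediam_le [PseudoEMetricSpace X] {x : X} {U : Set X}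
    (hU : U ∈ 𝓝 x) {ε : ℝ≥0∞} (hε : 0 < ε) :
    ∃ V : Set X, IsOpen V ∧ x ∈ V ∧ closure V ⊆ U ∧ Metric.ediam V ≤ ε := by
  obtain ⟨r, hr, hrU⟩ := Metric.nhds_basis_closedEBall.mem_iff.1 hU
  have hδ : 0 < min r (ε / 2) := lt_min hr (ENNReal.half_pos hε.ne')
  refine ⟨Metric.eball x (min r (ε / 2)), Metric.isOpen_eball, Metric.mem_eball_self hδ, ?_,
    ?_⟩
  · refine (closure_minimal Metric.eball_subset_closedEBall Metric.isClosed_closedEBall).trans ?_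
    exact (Metric.closedEBall_subset_closedEBall (min_le_left _ _)).trans hrU
  · calc Metric.ediam (Metric.eball x (min r (ε / 2)))
        ≤ 2 * min r (ε / 2) := Metric.ediam_eball_le
      _ ≤ 2 * (ε / 2) := by gcongr; exact min_le_right _ _
      _ = ε := ENNReal.mul_div_cancel two_ne_zero ENNReal.ofNat_ne_top

theorem exists_pairwise_disjoint_closure_subset [MetricSpace X] [PerfectSpace X] {U : Set X}
    (hU : IsOpen U) (hne : U.Nonempty) {ε : ℝ≥0∞} (hε : 0 < ε) :
    ∃ V : Bool → Set X, (∀ b, IsOpen (V b) ∧ (V b).Nonempty ∧ closure (V b) ⊆ U ∧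
      Metric.ediam (V b) ≤ ε) ∧ Pairwise (Disjoint on V) := by
  obtain ⟨x, hx⟩ := hne
  obtain ⟨y, ⟨hyU, -⟩, hyx⟩ := preperfect_iff_nhds.1 hU.preperfect x hx U (hU.mem_nhds hx)
  obtain ⟨u, v, hu, hv, hyu, hxv, huv⟩ := t2_separation hyx
  obtain ⟨V₁, hV₁, hyV₁, hV₁U, hV₁ε⟩ :=
    exists_isOpen_closure_subset_ediam_le ((hU.inter hu).mem_nhds ⟨hyU, hyu⟩) hε
  obtain ⟨V₀, hV₀, hxV₀, hV₀U, hV₀ε⟩ :=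
    exists_isOpen_closure_subset_ediam_le ((hU.inter hv).mem_nhds ⟨hx, hxv⟩) hε
  refine ⟨fun b => cond b V₁ V₀, Bool.forall_bool.2
    ⟨⟨hV₀, ⟨x, hxV₀⟩, hV₀U.trans inter_subset_left, hV₀ε⟩,
      ⟨hV₁, ⟨y, hyV₁⟩, hV₁U.trans inter_subset_left, hV₁ε⟩⟩, ?_⟩
  refine pairwise_disjoint_on_bool.2 (huv.mono ?_ ?_)
  · exact subset_closure.trans (hV₁U.trans inter_subset_right)
  · exact subset_closure.trans (hV₀U.trans inter_subset_right)

end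

namespace Mycielski

variable {X : Type*}

/-- Level `m` of a Cantor scheme: the set attached to a binary list of length `m` (the values at
other lists are irrelevant but are kept open, nonempty and small to avoid side conditions). -/
def IsLevel [PseudoEMetricSpace X] (m : ℕ) (S : List Bool → Set X) : Prop :=
  ∀ l, IsOpen (S l) ∧ (S l).Nonempty ∧ Metric.ediam (S l) ≤ 2⁻¹ ^ m

/-- As in `CantorScheme`, lists grow by `cons`: the children of `l` are `a :: l`. -/
def Refines [TopologicalSpace X] {n : ℕ} (R : Set (Fin n → X)) (m : ℕ)
    (S S' : List Bool → Set X) : Prop :=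
  (∀ l a, closure (S' (a :: l)) ⊆ S l) ∧
    (∀ l, Pairwise fun a b => Disjoint (S' (a :: l)) (S' (b :: l))) ∧
    ∀ t : Fin n → List Bool, Injective t → (∀ i, (t i).length = m + 1) →
      univ.pi (fun i => S' (t i)) ⊆ R

theorem exists_continuous_injective [PseudoMetricSpace X] [CompleteSpace X]
    {S : ℕ → List Bool → Set X} (hS : ∀ m, IsLevel m (S m))
    (hanti : ∀ m l a, closure (S (m + 1) (a :: l)) ⊆ S m l)
    (hdisj : ∀ m l, Pairwise fun a b => Disjoint (S (m + 1) (a :: l)) (S (m + 1) (b :: l))) :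
    ∃ f : (ℕ → Bool) → X,
      Continuous f ∧ Injective f ∧ ∀ σ m, f σ ∈ S m (res σ m) := by
  let A : List Bool → Set X := fun l => S l.length l
  have hA : ∀ σ m, A (res σ m) = S m (res σ m) := fun σ m => by simp only [A, res_length]
  have hdiam : VanishingDiam A := fun σ =>
    tendsto_of_tendsto_of_tendsto_of_le_of_le tendsto_const_nhds
      (ENNReal.tendsto_pow_atTop_nhds_zero_of_lt_one (by norm_num)) (fun _ => bot_le)
      fun m => hA σ m ▸ (hS m _).2.2
  have hdom := ClosureAntitone.map_of_vanishingDiam hdiam (fun l a => hanti _ l a)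
    fun l => (hS _ l).2.1
  refine ⟨fun σ => (inducedMap A).2 ⟨σ, hdom ▸ mem_univ σ⟩,
    hdiam.map_continuous.comp (continuous_id.subtype_mk _), fun σ τ h => ?_, fun σ m => ?_⟩
  · exact congrArg Subtype.val (Disjoint.map_injective (fun l => hdisj l.length l) h)
  · exact hA σ m ▸ map_mem _ m

variable [MetricSpace X] [PerfectSpace X]

theorem exists_refines {n : ℕ} {R : Set (Fin n → X)} (hR : Dense (interior R)) {m : ℕ}
    {S : List Bool → Set X} (hS : IsLevel m S) :
    ∃ S', IsLevel (m + 1) S' ∧ Refines R m S S' := by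
  choose V hV hVdisj using fun l => exists_pairwise_disjoint_closure_subset (hS l).1 (hS l).2.1
    (ε := 2⁻¹ ^ (m + 1)) (by simp [ENNReal.pow_pos])
  have hT : (univ.pi fun _ : Fin n => {l : List Bool | l.length = m + 1}).Finite :=
    Finite.pi fun _ => List.finite_length_eq Bool (m + 1)
  obtain ⟨S', hS', hS'V, hS'R⟩ := exists_shrink_forall_univ_pi_subset hR hT.toFinset
    (U := fun l : List Bool => V l.tail (l.headD false)) fun l => ⟨(hV _ _).1, (hV _ _).2.1⟩
  refine ⟨S',
    fun l => ⟨(hS' l).1, (hS' l).2, (Metric.ediam_mono (hS'V l)).trans (hV _ _).2.2.2⟩,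
    fun l a => (closure_mono (hS'V _)).trans (hV l a).2.2.1,
    fun l a b hab => (hVdisj l hab).mono (hS'V _) (hS'V _),
    fun t ht hlen => hS'R t (hT.mem_toFinset.2 fun i _ => hlen i) ht⟩

theorem exists_levels [Nonempty X] {n : ℕ → ℕ} {R : ∀ m, Set (Fin (n m) → X)}
    (hR : ∀ m, Dense (interior (R m))) : ∃ S : ℕ → List Bool → Set X,
      (∀ m, IsLevel m (S m)) ∧ ∀ m, Refines (R m) m (S m) (S (m + 1)) := by
  choose! next hnext using fun m (S : List Bool → Set X) (hS : IsLevel m S) =>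
    exists_refines (hR m) hS
  obtain ⟨V, hV, -⟩ :=
    exists_pairwise_disjoint_closure_subset (X := X) isOpen_univ univ_nonempty zero_lt_one
  let S : ℕ → List Bool → Set X := fun m => Nat.rec (fun _ => V false) next m
  have hS : ∀ m, IsLevel m (S m) := by
    intro m
    induction m with
    | zero =>
      exact fun _ => ⟨(hV false).1, (hV false).2.1, (hV false).2.2.2.trans_eq (pow_zero _).symm⟩
    | succ m ih => exact (hnext m _ ih).1
  exact ⟨S, hS, fun m => (hnext m _ (hS m)).2⟩

end Mycielski

/-- Mycielski's theorem. -/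
theorem exists_cantor_embedding_forall_injective_mem {X : Type*} [MetricSpace X] [CompleteSpace X]
    [PerfectSpace X] [Nonempty X] {ι : Type*} [Countable ι] [Nonempty ι] {n : ι → ℕ}
    (R : ∀ j, Set (Fin (n j) → X)) (hR : ∀ j, Dense (interior (R j))) :
    ∃ f : (ℕ → Bool) → X, Continuous f ∧ Injective f ∧
      ∀ j (x : Fin (n j) → X), Injective x → range x ⊆ range f → x ∈ R j := by
  obtain ⟨ρ, hρ⟩ := exists_surjective_nat ι
  -- refining level `m` for the relation number `(unpair m).1` treats each relation at
  -- arbitrarily high levels, as needed for tuples whose addresses split late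
  obtain ⟨S, hS, hSR⟩ := Mycielski.exists_levels (R := fun m => R (ρ (Nat.unpair m).1))
    fun m => hR _
  obtain ⟨f, hf, hinj, hfS⟩ := Mycielski.exists_continuous_injective hS (fun m => (hSR m).1)
    fun m => (hSR m).2.1
  refine ⟨f, hf, hinj, fun j x hx hxf => ?_⟩
  choose σ hσ using fun i => hxf (mem_range_self i)
  have hσ_inj : Injective σ := fun i i' h => hx (by rw [← hσ, ← hσ, h])
  obtain ⟨m₀, hm₀⟩ := eventually_atTop.1 (eventually_injective_res hσ_inj)
  obtain ⟨k, rfl⟩ := hρ j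
  have hbox := (hSR (Nat.pair k m₀)).2.2
  rw [Nat.unpair_pair] at hbox
  exact hbox (fun i => res (σ i) (Nat.pair k m₀ + 1))
    (hm₀ _ ((Nat.right_le_pair k m₀).trans (Nat.le_succ _))) (fun i => res_length _ _)
    fun i _ => hσ i ▸ hfS (σ i) _

theorem dense_interior_setOf_freeGroup_lift_pow_imp {G : Type*} [Group G] [TopologicalSpace G]
    [IsTopologicalGroup G] [T1Space G] {H : Subgroup G} (hH : Monoid.IsTorsionFree H) {n : ℕ}
    (w : FreeGroup (Fin n)) (k : ℕ) :
    Dense (interior {x : Fin n → closure (H : Set G) |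
      FreeGroup.lift (Subtype.val ∘ x) w ^ (k + 1) = 1 →
        FreeGroup.lift (Subtype.val ∘ x) w = 1}) := by
  have hF : Continuous fun x : Fin n → closure (H : Set G) =>
      FreeGroup.lift (Subtype.val ∘ x) w :=
    (FreeGroup.continuous_lift_apply w).comp (continuous_pi fun i => by fun_prop)
  have hHK : Dense (Subtype.val ⁻¹' (H : Set G) : Set (closure (H : Set G))) := by
    rw [Subtype.dense_iff, Subtype.image_preimage_coe, inter_eq_right.2 subset_closure]
  refine dense_interior_setOf_imp (isClosed_singleton.preimage (hF.pow (k + 1)))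
    (isClosed_singleton.preimage hF) (dense_pi univ fun _ _ => hHK) fun x hx hxk => ?_
  have hxH := FreeGroup.lift_mem (H := H) (fun i => hx i trivial) w
  exact congrArg Subtype.val
    (hH.eq_one_of_pow_eq_one (g := ⟨_, hxH⟩) k.succ_ne_zero (Subtype.ext hxk))

theorem statement13 {G : Type u} [Group G] [TopologicalSpace G] [IsTopologicalGroup G]
    (hG : CompletelyMetrizable G)
    (h : ∃ H : Subgroup G, Monoid.IsTorsionFree ↥H ∧ DenseInItselfSet (H : Set G)) :
    ∃ P : Set G, IsPerfectSet P ∧ Monoid.IsTorsionFree ↥(Subgroup.closure P) := by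
  obtain ⟨m, rfl, hm⟩ := hG
  obtain ⟨H, hH, -, hH_acc⟩ := h
  let K := closure (H : Set G)
  have : CompleteSpace K := isClosed_closure.completeSpace_coe
  have : PerfectSpace K := (Preperfect.perfect_closure hH_acc).acc.perfectSpace
  have : Nonempty K := ⟨⟨1, subset_closure H.one_mem⟩⟩
  have : Nonempty ((n : ℕ) × FreeGroup (Fin n) × ℕ) := ⟨⟨0, 1, 0⟩⟩
  obtain ⟨f, hf, hf_inj, hfR⟩ := exists_cantor_embedding_forall_injective_mem
    (fun q : (n : ℕ) × FreeGroup (Fin n) × ℕ => {x : Fin q.1 → K |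
      FreeGroup.lift (Subtype.val ∘ x) q.2.1 ^ (q.2.2 + 1) = 1 →
        FreeGroup.lift (Subtype.val ∘ x) q.2.1 = 1})
    fun q => dense_interior_setOf_freeGroup_lift_pow_imp hH q.2.1 q.2.2
  refine ⟨range (Subtype.val ∘ f), (continuous_subtype_val.comp hf).isPerfectSet_range
    (Subtype.val_injective.comp hf_inj), Subgroup.isTorsionFree_closure fun n x hx hxf w k => ?_⟩
  choose σ hσ using fun i => hxf (mem_range_self i)
  obtain rfl : Subtype.val ∘ f ∘ σ = x := funext hσ
  exact hfR ⟨n, w, k⟩ (f ∘ σ) hx.of_comp (range_comp_subset_range σ f)
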